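/- arXiv:2504.17654 — 7 statements merged into one kernel-verified Lean document; each statement's English description precedes it below -/
import Mathlib

section
/- Let (A, F) be a V-F-semilattice over a commutative unital quantale V, and let j : A → A be a V-F-nucleus. Then the set A_j = {a ∈ A | j(a) = a} of fixed points, equipped with joins ⨆_j S := j(⨆S), action v *_j a := j(v * a), and operator F_j := j ∘ F, is again a V-module with a join- and action-preserving endomorphism F_j; moreover the corestriction j : A → A_j is a surjective homomorphism of V-F-semilattices (it preserves arbitrary joins, the action, and satisfies j(F(a)) = F_j(j(a))). -/
/-- A commutative unital quantale structure on a complete lattice `V`. -/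
structure CommQuantale (V : Type*) [CompleteLattice V] where
  mul : V → V → V
  e : V
  mul_assoc : ∀ a b c : V, mul (mul a b) c = mul a (mul b c)
  mul_comm : ∀ a b : V, mul a b = mul b a
  mul_sSup : ∀ (a : V) (S : Set V), mul a (sSup S) = ⨆ s ∈ S, mul a s
  sSup_mul : ∀ (S : Set V) (a : V), mul (sSup S) a = ⨆ s ∈ S, mul s a
  mul_e : ∀ a : V, mul a e = a
  e_mul : ∀ a : V, mul e a = a

/-- A (left) module over a commutative unital quantale. -/
structure QModule {V : Type*} [CompleteLattice V] (Q : CommQuantale V)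
    (A : Type*) [CompleteLattice A] where
  smul : V → A → A
  smul_sSup : ∀ (v : V) (S : Set A), smul v (sSup S) = ⨆ s ∈ S, smul v s
  sSup_smul : ∀ (S : Set V) (a : A), smul (sSup S) a = ⨆ v ∈ S, smul v a
  mul_smul : ∀ (u v : V) (a : A), smul u (smul v a) = smul (Q.mul u v) a
  e_smul : ∀ a : A, smul Q.e a = a

/-- A homomorphism of quantale modules: preserves all joins and the action. -/
def IsModHom {V A B : Type*} [CompleteLattice V] [CompleteLattice A] [CompleteLattice B]
    {Q : CommQuantale V} (M : QModule Q A) (N : QModule Q B) (f : A → B) : Prop :=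
  (∀ S : Set A, f (sSup S) = ⨆ a ∈ S, f a) ∧
  ∀ (v : V) (a : A), f (M.smul v a) = N.smul v (f a)

theorem QModule.smul_iSup {V A : Type*} [CompleteLattice V] [CompleteLattice A]
    {Q : CommQuantale V} (M : QModule Q A) {ι : Sort*} (v : V) (g : ι → A) :
    M.smul v (⨆ i, g i) = ⨆ i, M.smul v (g i) := by
  rw [iSup, M.smul_sSup, iSup_range]

theorem QModule.iSup_smul {V A : Type*} [CompleteLattice V] [CompleteLattice A]
    {Q : CommQuantale V} (M : QModule Q A) {ι : Sort*} (g : ι → V) (a : A) :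
    M.smul (⨆ i, g i) a = ⨆ i, M.smul (g i) a := by
  rw [iSup, M.sSup_smul, iSup_range]

/-- The pointwise module structure on `T → A`. -/
def QModule.pi {V : Type*} [CompleteLattice V] {Q : CommQuantale V}
    {A : Type*} [CompleteLattice A] (M : QModule Q A) (T : Type*) :
    QModule Q (T → A) where
  smul v x := fun t => M.smul v (x t)
  smul_sSup v S := by
    funext t
    simp only [sSup_apply, iSup_apply]
    rw [M.smul_iSup]
    exact (iSup_subtype' (p := fun x => x ∈ S) (f := fun x _ => M.smul v (x t))).symm
  sSup_smul S a := by
    funext t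
    simp only [iSup_apply]
    rw [M.sSup_smul]
  mul_smul u v a := by funext t; exact M.mul_smul u v (a t)
  e_smul a := by funext t; exact M.e_smul (a t)

/-- The tense operator constructed from a `V`-frame `r` on `T`. -/
def FJ {V A T : Type*} [CompleteLattice V] [CompleteLattice A] {Q : CommQuantale V}
    (M : QModule Q A) (r : T → T → V) (x : T → A) : T → A :=
  fun i => ⨆ k, M.smul (r i k) (x k)


/-- A `V-F`-prenucleus on the `V-F`-semilattice `(A, F)`. -/
def IsPrenucleus {V A : Type*} [CompleteLattice V] [CompleteLattice A]
    {Q : CommQuantale V} (M : QModule Q A) (F : A → A) (j : A → A) : Prop :=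
  (∀ a : A, a ≤ j a) ∧
  (∀ a b : A, a ≤ b → j a ≤ j b) ∧
  (∀ (v : V) (a : A), M.smul v (j a) ≤ j (M.smul v a)) ∧
  (∀ a : A, F (j a) ≤ j (F a))

/-- A `V-F`-nucleus on the `V-F`-semilattice `(A, F)`. -/
def IsNucleus {V A : Type*} [CompleteLattice V] [CompleteLattice A]
    {Q : CommQuantale V} (M : QModule Q A) (F : A → A) (j : A → A) : Prop :=
  IsPrenucleus M F j ∧ ∀ a : A, j (j a) = j a

/-- The set of fixed points of `j`. -/
def Fixed {A : Type*} (j : A → A) : Set A := {a : A | j a = a}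


/-- the fixed points of a `V-F`-nucleus form a `V`-module with
joins `j ∘ sSup`, action `j ∘ smul` and endomorphism `j ∘ F`, and the
corestriction `j : A → A_j` is a surjective `V-F`-semilattice homomorphism. -/
theorem stmt4 {V A : Type*} [CompleteLattice V] [CompleteLattice A]
    (Q : CommQuantale V) (M : QModule Q A) (F : A → A)
    (hF : IsModHom M M F) (j : A → A) (hj : IsNucleus M F j) :
    -- the fixed-point set is closed under the induced operations
    (∀ S : Set A, S ⊆ Fixed j → j (sSup S) ∈ Fixed j) ∧
    (∀ (v : V) (a : A), a ∈ Fixed j → j (M.smul v a) ∈ Fixed j) ∧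
    (∀ a ∈ Fixed j, j (F a) ∈ Fixed j) ∧
    -- the module laws hold in `A_j`
    (∀ (v : V) (S : Set A), S ⊆ Fixed j →
      j (M.smul v (j (sSup S))) = j (sSup ((fun a => j (M.smul v a)) '' S))) ∧
    (∀ (S : Set V) (a : A), a ∈ Fixed j →
      j (M.smul (sSup S) a) = j (sSup ((fun v => j (M.smul v a)) '' S))) ∧
    (∀ (u v : V) (a : A), a ∈ Fixed j →
      j (M.smul u (j (M.smul v a))) = j (M.smul (Q.mul u v) a)) ∧
    (∀ a ∈ Fixed j, j (M.smul Q.e a) = a) ∧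
    -- `F_j = j ∘ F` preserves the joins and the action of `A_j`
    (∀ S : Set A, S ⊆ Fixed j →
      j (F (j (sSup S))) = j (sSup ((fun a => j (F a)) '' S))) ∧
    (∀ (v : V) (a : A), a ∈ Fixed j →
      j (F (j (M.smul v a))) = j (M.smul v (j (F a)))) ∧
    -- the corestriction `j : A → A_j` is a homomorphism of `V-F`-semilattices
    (∀ S : Set A, j (sSup S) = j (sSup (j '' S))) ∧
    (∀ (v : V) (a : A), j (M.smul v a) = j (M.smul v (j a))) ∧
    (∀ a : A, j (F a) = j (F (j a))) ∧
    -- and it is surjective onto the fixed points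
    (∀ a ∈ Fixed j, ∃ b : A, j b = a) := by
  obtain ⟨⟨h1, h2, h3, h4⟩, h5⟩ := hj
  -- action is monotone in each variable
  have smulA : ∀ (v : V) {a b : A}, a ≤ b → M.smul v a ≤ M.smul v b := by
    intro v a b hab
    have : M.smul v b = M.smul v (sSup {a, b}) := by
      rw [sSup_pair, sup_eq_right.mpr hab]
    rw [this, M.smul_sSup]
    exact le_biSup (fun x => M.smul v x) (Set.mem_insert a {b})
  have smulV : ∀ {u v : V} (a : A), u ≤ v → M.smul u a ≤ M.smul v a := by
    intro u v a huv
    have : M.smul v a = M.smul (sSup {u, v}) a := by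
      rw [sSup_pair, sup_eq_right.mpr huv]
    rw [this, M.sSup_smul]
    exact le_biSup (fun w => M.smul w a) (Set.mem_insert u {v})
  have Fmono : ∀ {a b : A}, a ≤ b → F a ≤ F b := by
    intro a b hab
    have : F b = F (sSup {a, b}) := by rw [sSup_pair, sup_eq_right.mpr hab]
    rw [this, hF.1]
    exact le_biSup (fun x => F x) (Set.mem_insert a {b})
  -- key criterion
  have hle : ∀ {x y : A}, x ≤ j y → j x ≤ j y := fun {x y} h =>
    le_trans (h2 _ _ h) (le_of_eq (h5 _))
  have jeq : ∀ {x y : A}, x ≤ j y → y ≤ j x → j x = j y := fun hx hy =>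
    le_antisymm (hle hx) (hle hy)
  refine ⟨fun S _ => h5 _, fun v a _ => h5 _, fun a _ => h5 _, ?_, ?_, ?_, ?_, ?_, ?_, ?_, ?_, ?_,
    fun a ha => ⟨a, ha⟩⟩
  · -- smul distributes over joins in A_j
    intro v S _
    refine jeq ?_ ?_
    · refine le_trans (h3 v _) (hle ?_)
      rw [M.smul_sSup]
      refine iSup_le fun a => iSup_le fun haS => ?_
      have hmem : (fun a => j (M.smul v a)) a ∈ (fun a => j (M.smul v a)) '' S :=
        Set.mem_image_of_mem _ haS
      exact le_trans (h1 _) (le_trans (le_sSup hmem) (h1 _))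
    · refine sSup_le ?_
      rintro x ⟨a, haS, rfl⟩
      refine hle (le_trans (smulA v ?_) (h1 _))
      exact le_trans (le_sSup haS) (h1 _)
  · -- sSup acting
    intro S a _
    refine jeq ?_ ?_
    · rw [M.sSup_smul]
      refine iSup_le fun v => iSup_le fun hvS => ?_
      have hmem : (fun v => j (M.smul v a)) v ∈ (fun v => j (M.smul v a)) '' S :=
        Set.mem_image_of_mem _ hvS
      exact le_trans (h1 _) (le_trans (le_sSup hmem) (h1 _))
    · refine sSup_le ?_
      rintro x ⟨v, hvS, rfl⟩
      refine hle ?_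
      have h' : M.smul v a ≤ M.smul (sSup S) a := smulV a (le_sSup hvS)
      exact le_trans h' (h1 _)
  · -- mul_smul
    intro u v a _
    rw [← M.mul_smul]
    exact jeq (h3 u _) (le_trans (smulA u (h1 _)) (h1 _))
  · -- e_smul
    intro a ha
    rw [M.e_smul]; exact ha
  · -- F_j preserves joins
    intro S _
    refine jeq ?_ ?_
    · refine le_trans (h4 _) (hle ?_)
      rw [hF.1]
      refine iSup_le fun a => iSup_le fun haS => ?_
      have hmem : (fun a => j (F a)) a ∈ (fun a => j (F a)) '' S :=
        Set.mem_image_of_mem _ haS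
      exact le_trans (h1 _) (le_trans (le_sSup hmem) (h1 _))
    · refine sSup_le ?_
      rintro x ⟨a, haS, rfl⟩
      refine hle (le_trans (Fmono ?_) (h1 _))
      exact le_trans (le_sSup haS) (h1 _)
  · -- F_j preserves the action
    intro v a _
    have L : j (F (j (M.smul v a))) = j (M.smul v (F a)) := by
      rw [← hF.2]
      exact jeq (h4 _) (le_trans (Fmono (h1 _)) (h1 _))
    have R : j (M.smul v (j (F a))) = j (M.smul v (F a)) :=
      jeq (h3 v _) (le_trans (smulA v (h1 _)) (h1 _))
    rw [L, R]
  · -- j preserves joins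
    intro S
    refine (jeq ?_ ?_).symm
    · refine sSup_le ?_
      rintro x ⟨a, haS, rfl⟩
      exact hle (le_trans (h1 _) (h2 _ _ (le_sSup haS)))
    · refine sSup_le fun a haS => ?_
      have hmem : j a ∈ j '' S := Set.mem_image_of_mem _ haS
      exact le_trans (h1 _) (le_trans (le_sSup hmem) (h1 _))
  · -- j preserves action
    intro v a
    exact (jeq (h3 v _) (le_trans (smulA v (h1 _)) (h1 _))).symm
  · -- j intertwines F
    intro a
    exact (jeq (h4 _) (le_trans (Fmono (h1 _)) (h1 _))).symm
end

section
/- Let (A, F) be a V-F-semilattice over a commutative unital quantale V and let j : A → A be a V-F-prenucleus. Then the fixed-point set A_j = {a | j(a) = a} is a closure system in the complete lattice A (i.e. closed under arbitrary infima computed in A), and the map n(j) : A → A defined by n(j)(a) = ⋀{x ∈ A_j | a ≤ x} is a V-F-nucleus on (A, F); in particular n(j) is idempotent, inflationary, monotone, and satisfies v * n(j)(a) ≤ n(j)(v*a) and F(n(j)(a)) ≤ n(j)(F(a)). -/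
/-- The closure operator associated with a prenucleus. -/
def nOf {A : Type*} [CompleteLattice A] (j : A → A) (a : A) : A :=
  sInf {x : A | j x = x ∧ a ≤ x}

/-- for a `V-F`-prenucleus `j`, the fixed points form a closure
system and the induced closure operator `n(j)` is a `V-F`-nucleus. -/
theorem stmt5 {V A : Type*} [CompleteLattice V] [CompleteLattice A]
    (Q : CommQuantale V) (M : QModule Q A) (F : A → A)
    (hF : IsModHom M M F) (j : A → A) (hj : IsPrenucleus M F j) :
    (∀ S : Set A, S ⊆ Fixed j → sInf S ∈ Fixed j) ∧
    IsNucleus M F (nOf j) := by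

  have smul_mono : ∀ (v : V) {a b : A}, a ≤ b → M.smul v a ≤ M.smul v b := by
    intro v a b hab
    have h : M.smul v (sSup {a, b}) = ⨆ s ∈ ({a,b} : Set A), M.smul v s := M.smul_sSup v _
    have hs : sSup ({a,b} : Set A) = b := by simp [sSup_pair, sup_eq_right.mpr hab]
    rw [hs] at h
    rw [h]
    exact le_biSup _ (by simp)
  have F_mono : ∀ {a b : A}, a ≤ b → F a ≤ F b := by
    intro a b hab
    have h := hF.1 {a, b}
    have hs : sSup ({a,b} : Set A) = b := by simp [sSup_pair, sup_eq_right.mpr hab]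
    rw [hs] at h
    rw [h]
    exact le_biSup _ (by simp)
  obtain ⟨hinfl, hmono, hsmul, hFj⟩ := hj
  have closed : ∀ S : Set A, S ⊆ Fixed j → sInf S ∈ Fixed j := by
    intro S hS
    have h1 : j (sInf S) ≤ sInf S := by
      apply le_sInf
      intro b hb
      calc j (sInf S) ≤ j b := hmono _ _ (sInf_le hb)
        _ = b := hS hb
    exact le_antisymm h1 (hinfl _)
  have nfix : ∀ a : A, j (nOf j a) = nOf j a := fun a => closed _ (fun x hx => hx.1)
  have nle : ∀ a : A, a ≤ nOf j a := fun a => le_sInf fun x hx => hx.2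
  have nmono : ∀ {a b : A}, a ≤ b → nOf j a ≤ nOf j b := by
    intro a b hab
    exact le_sInf fun x hx => sInf_le ⟨hx.1, hab.trans hx.2⟩
  have nmin : ∀ {a x : A}, j x = x → a ≤ x → nOf j a ≤ x := fun hx hax => sInf_le ⟨hx, hax⟩
  refine ⟨closed, ⟨⟨nle, fun a b h => nmono h, ?_, ?_⟩, ?_⟩⟩
  · intro v a
    set c := nOf j (M.smul v a) with hc
    have hcfix : j c = c := nfix _
    set x := sSup {b : A | M.smul v b ≤ c} with hx
    have hvx : M.smul v x ≤ c := by
      rw [hx, M.smul_sSup]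
      exact iSup₂_le fun b hb => hb
    have hax : a ≤ x := le_sSup (nle _)
    have hxfix : j x = x := by
      refine le_antisymm (le_sSup ?_) (hinfl _)
      show M.smul v (j x) ≤ c
      calc M.smul v (j x) ≤ j (M.smul v x) := hsmul v x
        _ ≤ j c := hmono _ _ hvx
        _ = c := hcfix
    calc M.smul v (nOf j a) ≤ M.smul v x := smul_mono v (nmin hxfix hax)
      _ ≤ c := hvx
  · intro a
    set c := nOf j (F a) with hc
    have hcfix : j c = c := nfix _
    set x := sSup {b : A | F b ≤ c} with hx
    have hFx : F x ≤ c := by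
      rw [hx, hF.1]
      exact iSup₂_le fun b hb => hb
    have hax : a ≤ x := le_sSup (nle _)
    have hxfix : j x = x := by
      refine le_antisymm (le_sSup ?_) (hinfl _)
      show F (j x) ≤ c
      calc F (j x) ≤ j (F x) := hFj x
        _ ≤ j c := hmono _ _ hFx
        _ = c := hcfix
    calc F (nOf j a) ≤ F x := F_mono (nmin hxfix hax)
      _ ≤ c := hFx
  · intro a
    exact le_antisymm (nmin (nfix a) le_rfl) (nle _)
end

section
/- Let (A, F) be a V-F-semilattice over a commutative unital quantale V and X ⊆ A × A a set of pairs such that (F(c), F(d)) ∈ X and (v*c, v*d) ∈ X whenever (c,d) ∈ X and v ∈ V. Define j[X] : A → A by j[X](a) = a ∨ ⨆{c ∈ A | ∃d ≤ a with (c,d) ∈ X or (d,c) ∈ X}. Then j[X] is a V-F-prenucleus on (A, F); in particular, for all a ∈ A and v ∈ V, v * j[X](a) ≤ j[X](v * a). -/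
/-- The operator `j[X]` generated by a set of pairs `X ⊆ A × A`. -/
def jX {A : Type*} [CompleteLattice A] (X : Set (A × A)) (a : A) : A :=
  a ⊔ sSup {c : A | ∃ d : A, d ≤ a ∧ ((c, d) ∈ X ∨ (d, c) ∈ X)}

theorem QModule.smul_sup {V A : Type*} [CompleteLattice V] [CompleteLattice A]
    {Q : CommQuantale V} (M : QModule Q A) (v : V) (a b : A) :
    M.smul v (a ⊔ b) = M.smul v a ⊔ M.smul v b := by
  rw [← sSup_pair, M.smul_sSup]
  simp [iSup_or, iSup_sup_eq]

theorem QModule.smul_mono {V A : Type*} [CompleteLattice V] [CompleteLattice A]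
    {Q : CommQuantale V} (M : QModule Q A) (v : V) {a b : A} (h : a ≤ b) :
    M.smul v a ≤ M.smul v b := by
  have : M.smul v b = M.smul v a ⊔ M.smul v b := by
    rw [← M.smul_sup, sup_eq_right.mpr h]
  rw [this]; exact le_sup_left

theorem IsModHom.sup {V A B : Type*} [CompleteLattice V] [CompleteLattice A]
    [CompleteLattice B] {Q : CommQuantale V} {M : QModule Q A} {N : QModule Q B}
    {f : A → B} (hf : IsModHom M N f) (a b : A) : f (a ⊔ b) = f a ⊔ f b := by
  rw [← sSup_pair, hf.1]
  simp [iSup_or, iSup_sup_eq]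

theorem IsModHom.mono {V A B : Type*} [CompleteLattice V] [CompleteLattice A]
    [CompleteLattice B] {Q : CommQuantale V} {M : QModule Q A} {N : QModule Q B}
    {f : A → B} (hf : IsModHom M N f) {a b : A} (h : a ≤ b) : f a ≤ f b := by
  have : f b = f a ⊔ f b := by rw [← hf.sup, sup_eq_right.mpr h]
  rw [this]; exact le_sup_left

/-- if `X` is closed under `F × F` and the action, then `j[X]`
is a `V-F`-prenucleus; in particular `v * j[X](a) ≤ j[X](v * a)`. -/
theorem stmt6 {V A : Type*} [CompleteLattice V] [CompleteLattice A]
    (Q : CommQuantale V) (M : QModule Q A) (F : A → A)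
    (hF : IsModHom M M F) (X : Set (A × A))
    (hXF : ∀ p ∈ X, (F p.1, F p.2) ∈ X)
    (hXs : ∀ p ∈ X, ∀ v : V, (M.smul v p.1, M.smul v p.2) ∈ X) :
    IsPrenucleus M F (jX X) := by
  refine ⟨fun a => le_sup_left, ?_, ?_, ?_⟩
  · intro a b hab
    apply sup_le_sup (le_trans hab le_rfl)
    apply sSup_le_sSup
    rintro c ⟨d, hd, hcd⟩
    exact ⟨d, le_trans hd hab, hcd⟩
  · intro v a
    rw [jX, M.smul_sup, M.smul_sSup]
    apply sup_le (le_sup_left) (iSup_le fun c => iSup_le fun hc => ?_)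
    obtain ⟨d, hd, hcd⟩ := hc
    apply le_sup_of_le_right
    apply le_sSup
    refine ⟨M.smul v d, M.smul_mono v hd, ?_⟩
    rcases hcd with h | h
    · exact Or.inl (hXs _ h v)
    · exact Or.inr (hXs _ h v)
  · intro a
    rw [jX, hF.sup, hF.1]
    apply sup_le (le_sup_left) (iSup_le fun c => iSup_le fun hc => ?_)
    obtain ⟨d, hd, hcd⟩ := hc
    apply le_sup_of_le_right
    apply le_sSup
    refine ⟨F d, hF.mono hd, ?_⟩
    rcases hcd with h | h
    · exact Or.inl (hXF _ h)
    · exact Or.inr (hXF _ h)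
end

section
/- There is a one-to-one correspondence between V-F-nuclei on a V-F-semilattice (A, F) and V-F-congruences on (A, F), given by j ↦ θ_j = {(a,b) | j(a) = j(b)} and θ ↦ j_θ where j_θ(x) = ⨆{y ∈ A | x θ y}; these assignments are mutually inverse. -/
/-- A `V-F`-congruence on the `V-F`-semilattice `(A, F)`. -/
def IsCongr {V A : Type*} [CompleteLattice V] [CompleteLattice A]
    {Q : CommQuantale V} (M : QModule Q A) (F : A → A) (θ : A → A → Prop) : Prop :=
  (∀ a : A, θ a a) ∧ (∀ a b : A, θ a b → θ b a) ∧
  (∀ a b c : A, θ a b → θ b c → θ a c) ∧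
  (∀ s : Set (A × A), (∀ p ∈ s, θ p.1 p.2) → θ (⨆ p ∈ s, p.1) (⨆ p ∈ s, p.2)) ∧
  (∀ (v : V) (a b : A), θ a b → θ (M.smul v a) (M.smul v b)) ∧
  (∀ a b : A, θ a b → θ (F a) (F b))


section Aux

variable {V A : Type*} [CompleteLattice V] [CompleteLattice A]
  {Q : CommQuantale V} {M : QModule Q A} {F : A → A}

lemma modHom_mono (hF : IsModHom M M F) : Monotone F := by
  intro a b hab
  have h : F (sSup {a, b}) = ⨆ c ∈ ({a, b} : Set A), F c := hF.1 _
  rw [sSup_pair, sup_eq_right.mpr hab] at h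
  calc F a ≤ ⨆ c ∈ ({a, b} : Set A), F c := le_iSup₂ (f := fun (c : A) (_ : c ∈ ({a, b} : Set A)) => F c) a (Set.mem_insert _ _)
    _ = F b := h.symm

lemma smul_mono (v : V) {c d : A} (h : c ≤ d) : M.smul v c ≤ M.smul v d := by
  have hs : M.smul v (sSup {c, d}) = ⨆ x ∈ ({c, d} : Set A), M.smul v x := M.smul_sSup v _
  rw [sSup_pair, sup_eq_right.mpr h] at hs
  calc M.smul v c ≤ ⨆ x ∈ ({c, d} : Set A), M.smul v x := le_iSup₂ (f := fun (x : A) (_ : x ∈ ({c, d} : Set A)) => M.smul v x) c (Set.mem_insert _ _)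
    _ = M.smul v d := hs.symm

lemma nucleus_iSup (j : A → A) (hj : IsNucleus M F j) {ι : Sort*} (g : ι → A) :
    j (⨆ i, g i) = j (⨆ i, j (g i)) := by
  obtain ⟨⟨hle, hmono, _, _⟩, hidem⟩ := hj
  apply le_antisymm
  · exact hmono _ _ (iSup_mono fun i => hle _)
  · have : (⨆ i, j (g i)) ≤ j (⨆ i, g i) :=
      iSup_le fun i => hmono _ _ (le_iSup g i)
    calc j (⨆ i, j (g i)) ≤ j (j (⨆ i, g i)) := hmono _ _ this
      _ = j (⨆ i, g i) := hidem _

/-- For a congruence, every element is related to the sup of its class. -/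
lemma congr_rel_sup (θ : A → A → Prop) (hθ : IsCongr M F θ) (x : A) :
    θ x (sSup {y : A | θ x y}) := by
  obtain ⟨hrefl, _, _, hjoin, _, _⟩ := hθ
  set s : Set (A × A) := {p | p.1 = x ∧ θ x p.2} with hs
  have h := hjoin s (fun p hp => hp.1 ▸ hp.2)
  have h1 : (⨆ p ∈ s, p.1) = x := by
    apply le_antisymm
    · exact iSup₂_le fun p hp => le_of_eq hp.1
    · exact le_iSup₂ (f := fun (p : A × A) (_ : p ∈ s) => p.1) (x, x) ⟨rfl, hrefl x⟩
  have h2 : (⨆ p ∈ s, p.2) = sSup {y : A | θ x y} := by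
    apply le_antisymm
    · exact iSup₂_le fun p hp => le_sSup hp.2
    · exact sSup_le fun y hy =>
        le_iSup₂ (f := fun (p : A × A) (_ : p ∈ s) => p.2) (x, y) ⟨rfl, hy⟩
  rwa [h1, h2] at h

lemma congr_sup_eq (θ : A → A → Prop) (hθ : IsCongr M F θ) {a b : A} (hab : θ a b) :
    sSup {y : A | θ a y} = sSup {y : A | θ b y} := by
  obtain ⟨_, hsymm, htrans, _, _, _⟩ := hθ
  congr 1
  ext y
  exact ⟨fun h => htrans _ _ _ (hsymm _ _ hab) h, fun h => htrans _ _ _ hab h⟩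

end Aux

/-- the assignments `j ↦ θ_j` and `θ ↦ j_θ` give a one-to-one
correspondence between `V-F`-nuclei and `V-F`-congruences on `(A, F)`. -/
theorem stmt7 {V A : Type*} [CompleteLattice V] [CompleteLattice A]
    (Q : CommQuantale V) (M : QModule Q A) (F : A → A)
    (hF : IsModHom M M F) :
    (∀ j : A → A, IsNucleus M F j → IsCongr M F (fun a b => j a = j b)) ∧
    (∀ θ : A → A → Prop, IsCongr M F θ → IsNucleus M F (fun x => sSup {y : A | θ x y})) ∧
    (∀ j : A → A, IsNucleus M F j → (fun x => sSup {y : A | j x = j y}) = j) ∧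
    (∀ θ : A → A → Prop, IsCongr M F θ →
      ∀ a b : A, (sSup {y : A | θ a y} = sSup {y : A | θ b y}) ↔ θ a b) := by
  obtain ⟨hFsup, hFsmul⟩ := hF
  have hFmono : Monotone F := modHom_mono (M := M) ⟨hFsup, hFsmul⟩
  refine ⟨?_, ?_, ?_, ?_⟩
  · -- nucleus → congruence
    intro j hj
    obtain ⟨⟨hle, hmono, hsmul, hFj⟩, hidem⟩ := hj
    refine ⟨fun a => rfl, fun a b h => h.symm, fun a b c h1 h2 => h1.trans h2, ?_, ?_, ?_⟩
    · intro s hs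
      rw [show (⨆ p ∈ s, p.1) = ⨆ p : s, (p : A × A).1 from iSup_subtype',
          show (⨆ p ∈ s, p.2) = ⨆ p : s, (p : A × A).2 from iSup_subtype',
          nucleus_iSup (M := M) (F := F) j ⟨⟨hle, hmono, hsmul, hFj⟩, hidem⟩,
          nucleus_iSup (M := M) (F := F) j ⟨⟨hle, hmono, hsmul, hFj⟩, hidem⟩
            (fun p : s => (p : A × A).2)]
      congr 1
      exact iSup_congr fun p => hs p p.2
    · intro v a b h
      have key : ∀ c : A, j (M.smul v c) = j (M.smul v (j c)) := by
        intro c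
        apply le_antisymm
        · exact hmono _ _ (smul_mono v (hle c))
        · calc j (M.smul v (j c)) ≤ j (j (M.smul v c)) := hmono _ _ (hsmul v c)
            _ = j (M.smul v c) := hidem _
      rw [key a, key b, h]
    · intro a b h
      have key : ∀ c : A, j (F c) = j (F (j c)) := by
        intro c
        apply le_antisymm
        · exact hmono _ _ (hFmono (hle c))
        · calc j (F (j c)) ≤ j (j (F c)) := hmono _ _ (hFj c)
            _ = j (F c) := hidem _
      rw [key a, key b, h]
  · -- congruence → nucleus
    intro θ hθ
    obtain ⟨hrefl, hsymm, htrans, hjoin, hsmulθ, hFθ⟩ := hθ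
    have hθ' : IsCongr M F θ := ⟨hrefl, hsymm, htrans, hjoin, hsmulθ, hFθ⟩
    have hrel := congr_rel_sup (M := M) (F := F) θ hθ'
    have hle : ∀ a : A, a ≤ sSup {y : A | θ a y} := fun a => le_sSup (hrefl a)
    have hclass : ∀ a y : A, θ a y → y ≤ sSup {z : A | θ a z} := fun a y h => le_sSup h
    have hmono : ∀ a b : A, a ≤ b →
        sSup {y : A | θ a y} ≤ sSup {y : A | θ b y} := by
      intro a b hab
      set ja := sSup {y : A | θ a y}
      set jb := sSup {y : A | θ b y}
      have h := hjoin {(a, ja), (b, jb)} (by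
        rintro p hp
        rcases hp with h | h <;> subst h
        · exact hrel a
        · exact hrel b)
      have h1 : (⨆ p ∈ ({(a, ja), (b, jb)} : Set (A × A)), p.1) = a ⊔ b := by
        apply le_antisymm
        · apply iSup₂_le
          intro p hp
          simp only [Set.mem_insert_iff, Set.mem_singleton_iff] at hp
          rcases hp with h | h <;> subst h <;> simp
        · exact sup_le (le_iSup₂ (f := fun (p : A × A) (_ : p ∈ _) => p.1) (a, ja) (by simp))
            (le_iSup₂ (f := fun (p : A × A) (_ : p ∈ _) => p.1) (b, jb) (by simp))
      have h2 : (⨆ p ∈ ({(a, ja), (b, jb)} : Set (A × A)), p.2) = ja ⊔ jb := by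
        apply le_antisymm
        · apply iSup₂_le
          intro p hp
          simp only [Set.mem_insert_iff, Set.mem_singleton_iff] at hp
          rcases hp with h | h <;> subst h <;> simp
        · exact sup_le (le_iSup₂ (f := fun (p : A × A) (_ : p ∈ _) => p.2) (a, ja) (by simp))
            (le_iSup₂ (f := fun (p : A × A) (_ : p ∈ _) => p.2) (b, jb) (by simp))
      rw [h1, h2, sup_eq_right.mpr hab] at h
      have : ja ⊔ jb ≤ jb := hclass b _ h
      exact le_trans le_sup_left this
    refine ⟨⟨hle, hmono, ?_, ?_⟩, ?_⟩
    · intro v a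
      exact hclass _ _ (hsmulθ v _ _ (hrel a))
    · intro a
      exact hclass _ _ (hFθ _ _ (hrel a))
    · intro a
      exact congr_sup_eq (M := M) (F := F) θ hθ' (hsymm _ _ (hrel a))
  · -- j_{θ_j} = j
    intro j hj
    obtain ⟨⟨hle, hmono, _, _⟩, hidem⟩ := hj
    funext x
    apply le_antisymm
    · exact sSup_le fun y hy => le_of_le_of_eq (hle y) (hy.symm : j y = j x)
    · exact le_sSup (show j x = j (j x) from (hidem x).symm)
  · -- classes: sup of class equal ↔ related
    intro θ hθ a b
    obtain ⟨hrefl, hsymm, htrans, hjoin, hsmulθ, hFθ⟩ := hθ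
    have hθ' : IsCongr M F θ := ⟨hrefl, hsymm, htrans, hjoin, hsmulθ, hFθ⟩
    constructor
    · intro h
      have ha := congr_rel_sup (M := M) (F := F) θ hθ' a
      have hb := congr_rel_sup (M := M) (F := F) θ hθ' b
      rw [h] at ha
      exact htrans _ _ _ ha (hsymm _ _ hb)
    · exact congr_sup_eq (M := M) (F := F) θ hθ'
end

section
/- Let V be a commutative unital quantale, L a V-module, and J = (T, r) a V-frame. Define ν_J : T → Hom_V(L^T, L) by (ν_J(i))(x) = x(i). Then each ν_J(i) is a V-module homomorphism, and ν_J is a V-frame homomorphism from J to the frame (Hom_V(L^T, L), r') where r'(α,β) = ⋀_{x ∈ L^T} (β(x) → α(F^J(x))) with (F^J x)(i) = ⨆_{k} r(i,k) * x(k) and a → b = ⨆{v | v*a ≤ b}; i.e., r(i,j) ≤ r'(ν_J(i), ν_J(j)) for all i, j ∈ T. -/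
/-- The residual `a → b = ⨆{v | v * a ≤ b}` in a `V`-module. -/
def resid {V L : Type*} [CompleteLattice V] [CompleteLattice L]
    {Q : CommQuantale V} (M : QModule Q L) (a b : L) : V :=
  sSup {v : V | M.smul v a ≤ b}

/-- The frame relation `r(α, β) = ⋀_x (β(x) → α(F(x)))` on module homomorphisms. -/
def frameRel {V A L : Type*} [CompleteLattice V] [CompleteLattice A] [CompleteLattice L]
    {Q : CommQuantale V} (ML : QModule Q L) (F : A → A) (α β : A → L) : V :=
  ⨅ x : A, resid ML (β x) (α (F x))


/-- each evaluation `ν_J(i) : L^T → L` is a module homomorphism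
and `ν_J` is a `V`-frame homomorphism `J → J[L^J, L]`. -/
theorem stmt14 {V L T : Type*} [CompleteLattice V] [CompleteLattice L]
    (Q : CommQuantale V) (M : QModule Q L) (r : T → T → V) :
    (∀ i : T, IsModHom (M.pi T) M (fun x : T → L => x i)) ∧
    (∀ i j : T, r i j ≤
      ⨅ x : T → L, resid M (x j) (FJ M r x i)) := by
  constructor
  · intro i
    constructor
    · intro S
      simp only [sSup_apply]
      exact (iSup_subtype' (p := fun x => x ∈ S) (f := fun x _ => x i)).symm
    · intro v a
      rfl
  · intro i j
    refine le_iInf fun x => le_sSup ?_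
    exact le_iSup (fun k => M.smul (r i k) (x k)) j
end

section
/- Let V be a commutative unital quantale, H = (A, F) a V-F-semilattice, and L a V-module. Let T = Hom_V(A, L) and r(α,β) = ⋀_{x∈A}(β(x) → α(F(x))), giving the V-frame J[H,L], and let F' be the operator on L^T defined by (F' y)(α) = ⨆_{β ∈ T} r(α,β) * y(β). Then the evaluation map μ_H : A → L^T, defined by (μ_H(x))(α) = α(x), is a V-module homomorphism and is lax: F'(μ_H(x)) ≤ μ_H(F(x)) for all x ∈ A. -/
/-- the evaluation map `μ_H : A → L^{Hom(A,L)}` is a module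
homomorphism and is lax with respect to `F` and the induced operator `F'`. -/
theorem stmt15 {V A L : Type*} [CompleteLattice V] [CompleteLattice A] [CompleteLattice L]
    (Q : CommQuantale V) (MA : QModule Q A) (ML : QModule Q L) (F : A → A)
    (hF : IsModHom MA MA F) :
    IsModHom MA (ML.pi {α : A → L // IsModHom MA ML α})
      (fun (x : A) (α : {α : A → L // IsModHom MA ML α}) => α.1 x) ∧
    ∀ x : A,
      (fun α : {α : A → L // IsModHom MA ML α} =>
          ⨆ β : {α : A → L // IsModHom MA ML α},
            ML.smul (frameRel ML F α.1 β.1) (β.1 x))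
        ≤ fun α : {α : A → L // IsModHom MA ML α} => α.1 (F x) := by
  constructor
  · constructor
    · intro S
      funext α
      simp only [QModule.pi, iSup_apply]
      rw [α.2.1 S]
    · intro v a
      funext α
      exact α.2.2 v a
  · intro x α
    apply iSup_le
    intro β
    have h1 : frameRel ML F α.1 β.1 ≤ resid ML (β.1 x) (α.1 (F x)) := iInf_le _ x
    have hmono : ML.smul (frameRel ML F α.1 β.1) (β.1 x) ≤
        ML.smul (resid ML (β.1 x) (α.1 (F x))) (β.1 x) := by
      have : resid ML (β.1 x) (α.1 (F x)) =
          sSup {frameRel ML F α.1 β.1, resid ML (β.1 x) (α.1 (F x))} := by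
        rw [sSup_pair, sup_eq_right.mpr h1]
      rw [this, ML.sSup_smul]
      exact le_iSup₂_of_le (frameRel ML F α.1 β.1) (by simp) le_rfl
    refine hmono.trans ?_
    rw [resid, ML.sSup_smul]
    exact iSup₂_le fun v hv => hv
end

section
/- In the diamond-lattice example with V = {0,b,1}, A = M₃, F(x) = a⊗x, and L = {0,1} as above, the V-frame J[H, L] on the three homomorphisms {f₁, f₇, f₈} with relation r(α,β) = ⋀_{x∈A}(β(x) →_L α(F(x))) (where 0 →_L 0 = 0 →_L 1 = 1 →_L 1 = 1 and 1 →_L 0 = 0, residuation computed in V) is given by: r(fᵢ, f₁) = 1 for all i ∈ {1,7,8}; r(f₈, f₇) = 1; and r(f₁,f₇) = r(f₁,f₈) = r(f₇,f₇) = r(f₇,f₈) = r(f₈,f₈) = 0. Consequently, the evaluation map μ_H : A → L^{\{f₁,f₇,f₈\}}, x ↦ (α ↦ α(x)), is not injective, since μ_H(b) = μ_H(c) = μ_H(1). -/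
/-- The five-element diamond lattice `M₃ = {0, a, b, c, 1}`. -/
inductive M3 : Type
  | z | a | b | c | o
  deriving DecidableEq

instance : Fintype M3 :=
  ⟨⟨↑[M3.z, M3.a, M3.b, M3.c, M3.o], by decide⟩, fun x => by cases x <;> decide⟩

namespace M3

/-- The order of the diamond lattice as a Boolean-valued relation. -/
def leB : M3 → M3 → Bool
  | .z, _ => true
  | _, .o => true
  | x, y => x == y

instance : LE M3 := ⟨fun x y => leB x y = true⟩

instance : DecidableRel ((· ≤ ·) : M3 → M3 → Prop) :=
  fun x y => inferInstanceAs (Decidable (leB x y = true))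

instance : PartialOrder M3 where
  le := (· ≤ ·)
  le_refl := by decide
  le_trans := by decide
  le_antisymm := by decide

instance : Lattice M3 where
  sup x y := if leB x y then y else if leB y x then x else .o
  inf x y := if leB x y then x else if leB y x then y else .z
  le_sup_left := by decide
  le_sup_right := by decide
  sup_le := by decide
  inf_le_left := by decide
  inf_le_right := by decide
  le_inf := by decide

instance : BoundedOrder M3 where
  top := .o
  bot := .z
  le_top := by decide
  bot_le := by decide

noncomputable instance : CompleteLattice M3 := Fintype.toCompleteLattice M3

/-- The quantale multiplication on `M₃`. -/
def mul : M3 → M3 → M3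
  | .z, _ => .z
  | _, .z => .z
  | .a, .a => .z
  | .a, _ => .a
  | .b, x => x
  | .c, .a => .a
  | .c, _ => .o
  | .o, .a => .a
  | .o, _ => .o

/-- Membership in the three-element subquantale `V = {0, b, 1}`. -/
def inV (x : M3) : Prop := x = M3.z ∨ x = M3.b ∨ x = M3.o

/-- The tense operator `F(x) = a ⊗ x`. -/
def F (x : M3) : M3 := mul .a x

end M3

/-- Membership in the two-element submodule `L = {0, 1}`. -/
def Lmem (x : M3) : Prop := x = M3.z ∨ x = M3.o

/-- The constant-`0` map. -/
def f1 : M3 → M3 := fun _ => M3.z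

/-- The map with `f₇(0) = f₇(a) = 0` and `f₇(b) = f₇(c) = f₇(1) = 1`. -/
def f7 : M3 → M3 := fun x => match x with
  | .b => .o | .c => .o | .o => .o | _ => .z

/-- The map with `f₈(0) = 0` and `f₈(x) = 1` for `x ≠ 0`. -/
def f8 : M3 → M3 := fun x => if x = M3.z then M3.z else M3.o

/-- The residual `a →_L b = ⨆{v ∈ V | v * a ≤ b}` of the submodule `L` over `V`. -/
noncomputable def resL (x y : M3) : M3 :=
  sSup {v : M3 | M3.inV v ∧ M3.mul v x ≤ y}

/-- The frame relation `r(α, β) = ⋀_{x ∈ A} (β(x) →_L α(F(x)))`. -/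
noncomputable def frameR (α β : M3 → M3) : M3 :=
  ⨅ x : M3, resL (β x) (α (M3.F x))

/-- The three-element carrier `{f₁, f₇, f₈}` of the frame `J[H, L]`. -/
def Hs : Set (M3 → M3) := {f1, f7, f8}

/-- The evaluation map `μ_H : A → L^{\{f₁,f₇,f₈\}}`, `x ↦ (α ↦ α(x))`. -/
def muH (x : M3) : Hs → M3 := fun α => α.1 x


/-!
`b` is the unit of `V = {0, b, 1}` and `x ≤ 1 ⊗ x`, so the residual `x →_L y` is `1` as soon as
`1 ⊗ x ≤ y` and `0` as soon as `x ≰ y`. For `L`-valued `β` the infimum `r(α, β)` is therefore `1`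
when `β x ≤ α (a ⊗ x)` for all `x`, and `0` when a single `x` violates this; `b` and `a` serve as
the violating points. Every map of `H` is constant on `{b, c, 1}`, which is why `μ_H` identifies
these three points.
-/

namespace M3

lemma z_le (x : M3) : z ≤ x := by cases x <;> decide

lemma le_o (x : M3) : x ≤ o := by cases x <;> decide

lemma b_mul (x : M3) : mul b x = x := by cases x <;> rfl

lemma le_o_mul (x : M3) : x ≤ mul o x := by cases x <;> decide

end M3

lemma resL_eq_o_of_o_mul_le {x y : M3} (h : M3.mul M3.o x ≤ y) : resL x y = M3.o :=
  le_antisymm (sSup_le fun v _ => M3.le_o v) (le_sSup ⟨Or.inr (Or.inr rfl), h⟩)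

lemma resL_eq_z_of_not_le {x y : M3} (h : ¬ x ≤ y) : resL x y = M3.z := by
  refine le_antisymm (sSup_le ?_) (M3.z_le _)
  rintro v ⟨rfl | rfl | rfl, hle⟩
  · exact le_rfl
  · exact absurd (M3.b_mul x ▸ hle) h
  · exact absurd ((M3.le_o_mul x).trans hle) h

lemma frameR_eq_o_of_forall {α β : M3 → M3} (h : ∀ x, M3.mul M3.o (β x) ≤ α (M3.F x)) :
    frameR α β = M3.o :=
  le_antisymm (M3.le_o _) (le_iInf fun x => (resL_eq_o_of_o_mul_le (h x)).ge)

lemma frameR_eq_z_of_not_le {α β : M3 → M3} (x : M3) (h : ¬ β x ≤ α (M3.F x)) :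
    frameR α β = M3.z :=
  le_antisymm ((iInf_le _ x).trans (resL_eq_z_of_not_le h).le) (M3.z_le _)

lemma muH_eq_of_forall_mem_Hs {x y : M3} (h : ∀ f ∈ Hs, f x = f y) : muH x = muH y :=
  funext fun α => h α.1 α.2

lemma Hs_const_on_b_c_o (f : M3 → M3) (hf : f ∈ Hs) : f M3.b = f M3.c ∧ f M3.c = f M3.o := by
  rcases hf with rfl | rfl | rfl <;> exact ⟨rfl, rfl⟩

open M3 in
/-- the values of the frame relation on `{f₁, f₇, f₈}`, and the
resulting non-injectivity of the evaluation map `μ_H`. -/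
theorem stmt19 :
    (frameR f1 f1 = M3.o ∧ frameR f7 f1 = M3.o ∧ frameR f8 f1 = M3.o ∧
      frameR f8 f7 = M3.o) ∧
    (frameR f1 f7 = M3.z ∧ frameR f1 f8 = M3.z ∧ frameR f7 f7 = M3.z ∧
      frameR f7 f8 = M3.z ∧ frameR f8 f8 = M3.z) ∧
    (muH M3.b = muH M3.c ∧ muH M3.c = muH M3.o) ∧
    ¬ Function.Injective muH := by
  have hbc : muH b = muH c := muH_eq_of_forall_mem_Hs fun f hf => (Hs_const_on_b_c_o f hf).1
  have hco : muH c = muH o := muH_eq_of_forall_mem_Hs fun f hf => (Hs_const_on_b_c_o f hf).2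
  refine ⟨⟨?_, ?_, ?_, ?_⟩, ⟨?_, ?_, ?_, ?_, ?_⟩, ⟨hbc, hco⟩, ?_⟩
  iterate 4 exact frameR_eq_o_of_forall (by decide)
  iterate 4 exact frameR_eq_z_of_not_le b (by decide)
  · exact frameR_eq_z_of_not_le a (by decide)
  · exact fun hinj => absurd (hinj hbc) (by decide)
end
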